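/- Let N ≥ 1, let m ∈ {1,…,N}, let w ∈ ℝ^N have strictly positive entries, let c ∈ [0,1), and let n, n*, y ∈ ℝ^N satisfy ‖y − n*‖_w ≤ c·‖n − n*‖_w. For each subset S ⊆ {1,…,N} define n_S ∈ ℝ^N by n_S(j) = y(j) if j ∈ S and n_S(j) = n(j) otherwise. Then the average of ‖n_S − n*‖_w² over all subsets S of cardinality m satisfies (1/C(N,m)) · Σ_{S ⊆ {1,…,N}, |S| = m} ‖n_S − n*‖_w² ≤ (1 − m(1−c²)/N) · ‖n − n*‖_w², where C(N,m) is the binomial coefficient. -/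

import Mathlib

/-- Weighted squared norm `‖x‖_w² = Σ_j w(j) x(j)²`. -/
def wnormSq {N : ℕ} (w x : Fin N → ℝ) : ℝ := ∑ j, w j * (x j) ^ 2

/-- Weighted norm `‖x‖_w = sqrt(Σ_j w(j) x(j)²)`. -/
noncomputable def wnorm {N : ℕ} (w x : Fin N → ℝ) : ℝ := Real.sqrt (wnormSq w x)

/-! Every coordinate lies in the same number of `m`-subsets, namely a fraction `m / N` of them
(double counting). Hence averaging `‖n_S − n*‖_w²` over all `m`-subsets `S` gives exactly the
convex combination `(m/N) ‖y − n*‖_w² + (1 − m/N) ‖n − n*‖_w²`, and `‖y − n*‖_w² ≤ c² ‖n − n*‖_w²`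
finishes the estimate. -/

open Finset

namespace Finset

variable {α : Type*} [DecidableEq α]

theorem card_filter_mem_powersetCard_mul_card {s : Finset α} {a : α} (ha : a ∈ s) (m : ℕ) :
    #{T ∈ s.powersetCard m | a ∈ T} * #s = m * (#s).choose m := by
  cases m with
  | zero => simp
  | succ k =>
    obtain ⟨p, hp⟩ : ∃ p, #s = p + 1 := Nat.exists_eq_succ_of_ne_zero (card_ne_zero_of_mem ha)
    have hcount := card_filter_powersetCard_subset {a} s (k + 1) (singleton_subset_iff.2 ha)
      (by simp)
    simp only [singleton_subset_iff, card_singleton, hp] at hcount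
    rw [hcount, hp, Nat.add_sub_cancel, Nat.add_sub_cancel, mul_comm, Nat.add_one_mul_choose_eq,
      mul_comm]

variable [Fintype α] {K : Type*} [Field K] [CharZero K]

theorem sum_powersetCard_ite_mem (m : ℕ) (a : α) (x y : K) :
    ∑ S ∈ powersetCard m univ, (if a ∈ S then x else y) =
      (Fintype.card α).choose m *
        (m / Fintype.card α * x + (1 - m / Fintype.card α) * y) := by
  have hcard : (Fintype.card α : K) ≠ 0 := by
    exact_mod_cast (Fintype.card_pos_iff.2 ⟨a⟩).ne'
  have hcount : (#{S ∈ powersetCard m univ | a ∈ S} : K) =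
      m / Fintype.card α * (Fintype.card α).choose m := by
    rw [div_mul_eq_mul_div, eq_div_iff hcard, ← card_univ]
    exact_mod_cast card_filter_mem_powersetCard_mul_card (mem_univ a) m
  rw [sum_ite, sum_const, sum_const, filter_not, card_sdiff_of_subset (filter_subset _ _),
    card_powersetCard, card_univ, nsmul_eq_mul, nsmul_eq_mul, Nat.cast_sub, hcount]
  · ring
  · rw [← card_univ, ← card_powersetCard]
    exact card_filter_le _ _

theorem sum_powersetCard_sum_ite (m : ℕ) (f g : α → K) :
    ∑ S ∈ powersetCard m univ, ∑ j, (if j ∈ S then f j else g j) =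
      (Fintype.card α).choose m *
        (m / Fintype.card α * ∑ j, f j + (1 - m / Fintype.card α) * ∑ j, g j) := by
  rw [sum_comm]
  simp only [sum_powersetCard_ite_mem, ← mul_sum, sum_add_distrib]

end Finset

section WeightedNorm

variable {N : ℕ} {w : Fin N → ℝ}

theorem wnormSq_nonneg (hw : ∀ j, 0 ≤ w j) (x : Fin N → ℝ) : 0 ≤ wnormSq w x :=
  sum_nonneg fun j _ => mul_nonneg (hw j) (sq_nonneg _)

theorem wnormSq_le_of_wnorm_le (hw : ∀ j, 0 ≤ w j) {x z : Fin N → ℝ} {c : ℝ}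
    (h : wnorm w x ≤ c * wnorm w z) : wnormSq w x ≤ c ^ 2 * wnormSq w z := by
  have hsq := pow_le_pow_left₀ (Real.sqrt_nonneg _) h 2
  unfold wnorm at hsq
  rwa [mul_pow, Real.sq_sqrt (wnormSq_nonneg hw x),
    Real.sq_sqrt (wnormSq_nonneg hw z)] at hsq

theorem average_wnormSq_piecewise_sub {m : ℕ} (hmN : m ≤ N) (n nstar y : Fin N → ℝ) :
    (1 / (N.choose m : ℝ)) *
        ∑ S ∈ powersetCard m (univ : Finset (Fin N)),
          wnormSq w ((fun j => if j ∈ S then y j else n j) - nstar) =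
      m / N * wnormSq w (y - nstar) + (1 - m / N) * wnormSq w (n - nstar) := by
  have hchoose : (N.choose m : ℝ) ≠ 0 := by exact_mod_cast (Nat.choose_pos hmN).ne'
  have hsummand : ∀ S : Finset (Fin N),
      wnormSq w ((fun j => if j ∈ S then y j else n j) - nstar) =
        ∑ j, if j ∈ S then w j * (y - nstar) j ^ 2 else w j * (n - nstar) j ^ 2 := fun S =>
    sum_congr rfl fun j _ => by split_ifs with hj <;> simp [hj]
  simp only [hsummand, sum_powersetCard_sum_ite, Fintype.card_fin]
  rw [one_div, inv_mul_cancel_left₀ hchoose]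
  rfl

end WeightedNorm

theorem block_coordinate_average_contraction_general {N : ℕ} (m : ℕ)
    (hmN : m ≤ N) (w : Fin N → ℝ) (hw : ∀ j, 0 < w j)
    (c : ℝ) (n nstar y : Fin N → ℝ)
    (hy : wnorm w (y - nstar) ≤ c * wnorm w (n - nstar)) :
    (1 / (N.choose m : ℝ)) *
        ∑ S ∈ Finset.powersetCard m (Finset.univ : Finset (Fin N)),
          wnormSq w ((fun j => if j ∈ S then y j else n j) - nstar) ≤
      (1 - (m : ℝ) * (1 - c ^ 2) / N) * wnormSq w (n - nstar) := by
  rw [average_wnormSq_piecewise_sub hmN]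
  calc m / N * wnormSq w (y - nstar) + (1 - m / N) * wnormSq w (n - nstar)
      ≤ m / N * (c ^ 2 * wnormSq w (n - nstar)) + (1 - m / N) * wnormSq w (n - nstar) := by
        gcongr
        exact wnormSq_le_of_wnorm_le (fun j => (hw j).le) hy
    _ = (1 - (m : ℝ) * (1 - c ^ 2) / N) * wnormSq w (n - nstar) := by ring

/-- Block-coordinate averaging: if `‖y − n*‖_w ≤ c ‖n − n*‖_w`, then the average over all
subsets `S` of cardinality `m` of `‖n_S − n*‖_w²`, where `n_S` agrees with `y` on `S` and
with `n` off `S`, is at most `(1 − m(1−c²)/N) ‖n − n*‖_w²`. -/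
theorem block_coordinate_average_contraction {N : ℕ} (hN : 1 ≤ N) (m : ℕ)
    (hm1 : 1 ≤ m) (hmN : m ≤ N) (w : Fin N → ℝ) (hw : ∀ j, 0 < w j)
    (c : ℝ) (hc0 : 0 ≤ c) (hc1 : c < 1) (n nstar y : Fin N → ℝ)
    (hy : wnorm w (y - nstar) ≤ c * wnorm w (n - nstar)) :
    (1 / (N.choose m : ℝ)) *
        ∑ S ∈ Finset.powersetCard m (Finset.univ : Finset (Fin N)),
          wnormSq w ((fun j => if j ∈ S then y j else n j) - nstar) ≤
      (1 - (m : ℝ) * (1 - c ^ 2) / N) * wnormSq w (n - nstar) :=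
  block_coordinate_average_contraction_general m hmN w hw c n nstar y hy
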